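/- For every real k, natural number n ≥ 1, and smooth f : ℍ → ℂ, the n-fold iterated Maass raising operator satisfies R_k^n f = Σ_{m=0}^{n} C(n,m) · (Γ(k+n)/Γ(k+n-m)) · y^{-m} (2i)^{n-m} (∂^{n-m} f/∂τ^{n-m}), where y = Im(τ). -/

import Mathlib

open Complex Finset
open scoped Real

/-- Generalized binomial coefficient `C(x, m) = x(x-1)⋯(x-m+1)/m!`. -/
noncomputable def gchoose (x : ℂ) (m : ℕ) : ℂ :=
  (∏ i ∈ Finset.range m, (x - i)) / (Nat.factorial m)

/-- Wirtinger derivative `∂/∂τ`. -/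
noncomputable def wderiv (f : ℂ → ℂ) (τ : ℂ) : ℂ :=
  (fderiv ℝ f τ 1 - Complex.I * fderiv ℝ f τ Complex.I) / 2

/-- Wirtinger derivative `∂/∂τ̄`. -/
noncomputable def wderivBar (f : ℂ → ℂ) (τ : ℂ) : ℂ :=
  (fderiv ℝ f τ 1 + Complex.I * fderiv ℝ f τ Complex.I) / 2

/-- Iterated Wirtinger derivative `∂^n/∂τ^n`. -/
noncomputable def wderivN : ℕ → (ℂ → ℂ) → (ℂ → ℂ)
  | 0, f => f
  | n + 1, f => wderiv (wderivN n f)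

/-- The ν-th Rankin-Cohen bracket of `f` (weight `k`) and `g` (weight `ℓ`). -/
noncomputable def RC (k l : ℂ) (ν : ℕ) (f g : ℂ → ℂ) (τ : ℂ) : ℂ :=
  (2 * (π : ℂ) * Complex.I)⁻¹ ^ ν *
    ∑ μ ∈ Finset.range (ν + 1), (-1 : ℂ) ^ μ * gchoose (k + ν - 1) (ν - μ) *
      gchoose (l + ν - 1) μ * wderivN μ f τ * wderivN (ν - μ) g τ

/-- The Maass raising operator `R_k := 2i ∂/∂τ + k y⁻¹`. -/
noncomputable def raise (k : ℂ) (f : ℂ → ℂ) (τ : ℂ) : ℂ :=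
  2 * Complex.I * wderiv f τ + k * (τ.im : ℂ)⁻¹ * f τ

/-- The iterate `R_k^n := R_{k+2(n-1)} ∘ ⋯ ∘ R_{k+2} ∘ R_k`, with `R_k^0 = id`. -/
noncomputable def raiseIter (k : ℂ) : ℕ → (ℂ → ℂ) → (ℂ → ℂ)
  | 0, f => f
  | n + 1, f => raise (k + 2 * n) (raiseIter k n f)

open scoped Topology in
lemma wderiv_congr {f g : ℂ → ℂ} {τ : ℂ} (h : f =ᶠ[nhds τ] g) :
    wderiv f τ = wderiv g τ := by
  unfold wderiv; rw [h.fderiv_eq]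

lemma wderiv_of_hasFDerivAt {f : ℂ → ℂ} {L : ℂ →L[ℝ] ℂ} {τ : ℂ} (h : HasFDerivAt f L τ) :
    wderiv f τ = (L 1 - Complex.I * L Complex.I) / 2 := by
  unfold wderiv; rw [h.fderiv]

lemma wderiv_const (c : ℂ) (τ : ℂ) : wderiv (fun _ => c) τ = 0 := by
  unfold wderiv; rw [fderiv_fun_const]; simp

lemma wderiv_const_mul {f : ℂ → ℂ} {τ : ℂ} (c : ℂ) (hf : DifferentiableAt ℝ f τ) :
    wderiv (fun σ => c * f σ) τ = c * wderiv f τ := by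
  unfold wderiv
  rw [fderiv_const_mul hf]
  simp [ContinuousLinearMap.smul_apply, smul_eq_mul]
  ring

lemma wderiv_mul {f g : ℂ → ℂ} {τ : ℂ} (hf : DifferentiableAt ℝ f τ)
    (hg : DifferentiableAt ℝ g τ) :
    wderiv (fun σ => f σ * g σ) τ = wderiv f τ * g τ + f τ * wderiv g τ := by
  unfold wderiv
  rw [fderiv_fun_mul hf hg]
  simp [ContinuousLinearMap.add_apply, ContinuousLinearMap.smul_apply, smul_eq_mul]
  ring

lemma wderiv_sum {s : Finset ℕ} {F : ℕ → ℂ → ℂ} {τ : ℂ}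
    (h : ∀ i ∈ s, DifferentiableAt ℝ (F i) τ) :
    wderiv (fun σ => ∑ i ∈ s, F i σ) τ = ∑ i ∈ s, wderiv (F i) τ := by
  unfold wderiv
  rw [fderiv_fun_sum h]
  simp only [ContinuousLinearMap.sum_apply]
  rw [Finset.mul_sum, ← Finset.sum_sub_distrib, Finset.sum_div]

lemma contDiff_wderiv {f : ℂ → ℂ} (hf : ContDiff ℝ (⊤ : ℕ∞) f) : ContDiff ℝ (⊤ : ℕ∞) (wderiv f) := by
  have h : ContDiff ℝ (⊤ : ℕ∞) (fderiv ℝ f) := hf.fderiv_right (by simp)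
  have h1 : ContDiff ℝ (⊤ : ℕ∞) (fun τ => fderiv ℝ f τ 1) :=
    (ContinuousLinearMap.apply ℝ ℂ (1:ℂ)).contDiff.comp h
  have hI : ContDiff ℝ (⊤ : ℕ∞) (fun τ => fderiv ℝ f τ Complex.I) :=
    (ContinuousLinearMap.apply ℝ ℂ (Complex.I)).contDiff.comp h
  exact (h1.sub (contDiff_const.mul hI)).div_const 2

lemma contDiff_wderivN {f : ℂ → ℂ} (hf : ContDiff ℝ (⊤ : ℕ∞) f) (n : ℕ) :
    ContDiff ℝ (⊤ : ℕ∞) (wderivN n f) := by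
  induction n with
  | zero => exact hf
  | succ n ih => exact contDiff_wderiv ih

lemma hasFDerivAt_imc (τ : ℂ) :
    HasFDerivAt (fun σ : ℂ => ((σ.im : ℝ) : ℂ)) (Complex.ofRealCLM.comp Complex.imCLM) τ :=
  (Complex.ofRealCLM.comp Complex.imCLM).hasFDerivAt

lemma q_hasFDerivAt {τ : ℂ} (hτ : τ.im ≠ 0) :
    HasFDerivAt (fun σ : ℂ => ((σ.im : ℝ) : ℂ)⁻¹)
      ((-ContinuousLinearMap.mulLeftRight ℝ ℂ ((τ.im:ℂ))⁻¹ ((τ.im:ℂ))⁻¹).comp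
        (Complex.ofRealCLM.comp Complex.imCLM)) τ := by
  have hx : ((τ.im : ℝ) : ℂ) ≠ 0 := Complex.ofReal_ne_zero.mpr hτ
  exact (hasFDerivAt_inv' hx).comp τ (hasFDerivAt_imc τ)

lemma q_differentiableAt {τ : ℂ} (hτ : τ.im ≠ 0) :
    DifferentiableAt ℝ (fun σ : ℂ => ((σ.im : ℝ) : ℂ)⁻¹) τ :=
  (q_hasFDerivAt hτ).differentiableAt

lemma wderiv_q {τ : ℂ} (hτ : τ.im ≠ 0) :
    wderiv (fun σ : ℂ => ((σ.im : ℝ) : ℂ)⁻¹) τ = (Complex.I / 2) * ((τ.im:ℂ))⁻¹ ^ 2 := by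
  rw [wderiv_of_hasFDerivAt (q_hasFDerivAt hτ)]
  simp [ContinuousLinearMap.mulLeftRight_apply]
  ring

lemma wderiv_qpow {τ : ℂ} (hτ : τ.im ≠ 0) (m : ℕ) :
    wderiv (fun σ : ℂ => ((σ.im : ℝ) : ℂ)⁻¹ ^ m) τ
      = (m : ℂ) * (Complex.I / 2) * ((τ.im:ℂ))⁻¹ ^ (m + 1) := by
  induction m with
  | zero => simp only [pow_zero]; rw [wderiv_const]; simp
  | succ m ih =>
    have h1 : (fun σ : ℂ => ((σ.im : ℝ) : ℂ)⁻¹ ^ (m+1))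
        = fun σ : ℂ => ((σ.im : ℝ) : ℂ)⁻¹ ^ m * ((σ.im : ℝ) : ℂ)⁻¹ := by
      funext σ; ring
    rw [h1, wderiv_mul (show DifferentiableAt ℝ (fun σ : ℂ => ((σ.im : ℝ) : ℂ)⁻¹ ^ m) τ from
      (q_differentiableAt hτ).pow m) (q_differentiableAt hτ), ih,
      wderiv_q hτ]
    push_cast
    ring

lemma coeff_rec (k : ℂ) (n m : ℕ) (hm : m ≤ n) :
    ((n+1).choose (m+1) : ℂ) * (∏ i ∈ Finset.range (m+1), (k + ((n+1 : ℕ) : ℂ) - 1 - i))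
      = (n.choose (m+1) : ℂ) * (∏ i ∈ Finset.range (m+1), (k + n - 1 - i))
        + (k + 2*n - m) * ((n.choose m : ℂ) * ∏ i ∈ Finset.range m, (k + n - 1 - i)) := by
  have h1 : (∏ i ∈ Finset.range (m+1), (k + ((n+1 : ℕ) : ℂ) - 1 - i))
      = (∏ i ∈ Finset.range m, (k + (n:ℂ) - 1 - i)) * (k + n) := by
    rw [Finset.prod_range_succ' (fun i : ℕ => (k + ((n+1 : ℕ) : ℂ) - 1 - (i:ℂ))) m]
    exact congrArg₂ (· * ·) (Finset.prod_congr rfl fun i _ => by push_cast; ring)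
      (by push_cast; ring)
  have h2 : (∏ i ∈ Finset.range (m+1), (k + (n:ℂ) - 1 - i))
      = (∏ i ∈ Finset.range m, (k + (n:ℂ) - 1 - i)) * (k + n - 1 - m) := by
    rw [Finset.prod_range_succ]
  have hc1 : ((n+1).choose (m+1) : ℂ) = (n.choose m : ℂ) + (n.choose (m+1) : ℂ) := by
    exact_mod_cast congrArg (Nat.cast : ℕ → ℂ) (Nat.choose_succ_succ n m)
  have hc2 : (n.choose (m+1) : ℂ) * ((m:ℂ)+1) = (n.choose m : ℂ) * ((n:ℂ) - m) := by
    have h := congrArg (Nat.cast : ℕ → ℂ) (Nat.choose_succ_right_eq n m)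
    push_cast [Nat.cast_sub hm] at h
    exact h
  rw [h1, h2, hc1]
  linear_combination (∏ i ∈ Finset.range m, (k + (n:ℂ) - 1 - i)) * hc2

lemma raise_key (k : ℂ) (f : ℂ → ℂ) (hf : ContDiff ℝ (⊤ : ℕ∞) f) (n : ℕ) :
    ∀ τ : ℂ, 0 < τ.im →
    raiseIter k n f τ = ∑ m ∈ Finset.range (n + 1), (n.choose m : ℂ) *
        (∏ i ∈ Finset.range m, (k + n - 1 - i)) *
        ((τ.im : ℂ)⁻¹) ^ m * (2 * Complex.I) ^ (n - m) * wderivN (n - m) f τ := by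
  induction n with
  | zero =>
    intro τ hτ
    simp [raiseIter, wderivN]
  | succ n ih =>
    intro τ hτ
    have hτ' : τ.im ≠ 0 := ne_of_gt hτ
    -- abbreviations
    set Q : ℂ := ((τ.im : ℂ))⁻¹ with hQ
    set c : ℕ → ℂ := fun m => (n.choose m : ℂ) * (∏ i ∈ Finset.range m, (k + n - 1 - i)) with hc
    have hD : ∀ j, DifferentiableAt ℝ (wderivN j f) τ := fun j =>
      ((contDiff_wderivN hf j).differentiable (by simp)).differentiableAt
    have hq : DifferentiableAt ℝ (fun σ : ℂ => ((σ.im : ℝ) : ℂ)⁻¹) τ := q_differentiableAt hτ'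
    have hqm : ∀ m : ℕ, DifferentiableAt ℝ (fun σ : ℂ => ((σ.im : ℝ) : ℂ)⁻¹ ^ m) τ :=
      fun m => hq.pow m
    set T : ℂ → ℂ := fun σ => ∑ m ∈ Finset.range (n + 1),
      (c m * (2 * Complex.I) ^ (n - m)) * (((σ.im : ℂ))⁻¹ ^ m * wderivN (n - m) f σ) with hT
    have hev : raiseIter k n f =ᶠ[nhds τ] T := by
      have hopen : IsOpen {σ : ℂ | 0 < σ.im} := isOpen_lt continuous_const Complex.continuous_im
      filter_upwards [hopen.mem_nhds hτ] with σ hσ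
      rw [ih σ hσ, hT]
      exact Finset.sum_congr rfl fun m _ => by rw [hc]; ring
    have hTτ : T τ = ∑ m ∈ Finset.range (n + 1), (c m * (2 * Complex.I) ^ (n - m)) *
        (Q ^ m * wderivN (n - m) f τ) := rfl
    have hdiffterm : ∀ m ∈ Finset.range (n + 1), DifferentiableAt ℝ
        (fun σ : ℂ => (c m * (2 * Complex.I) ^ (n - m)) *
          (((σ.im : ℂ))⁻¹ ^ m * wderivN (n - m) f σ)) τ :=
      fun m _ => (differentiableAt_const _).mul ((hqm m).mul (hD (n - m)))
    have hwT : wderiv T τ = ∑ m ∈ Finset.range (n + 1),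
        (c m * (2 * Complex.I) ^ (n - m)) *
          (((m : ℂ) * (Complex.I / 2) * Q ^ (m + 1)) * wderivN (n - m) f τ
            + Q ^ m * wderivN (n - m + 1) f τ) := by
      rw [hT, wderiv_sum hdiffterm]
      refine Finset.sum_congr rfl fun m _ => ?_
      rw [wderiv_const_mul _ (show DifferentiableAt ℝ (fun σ : ℂ => ((σ.im : ℂ))⁻¹ ^ m * wderivN (n - m) f σ) τ
          from (hqm m).mul (hD (n - m))),
        wderiv_mul (hqm m) (hD (n - m)), wderiv_qpow hτ' m]
      rfl
    have hstep : raiseIter k (n + 1) f τ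
        = 2 * Complex.I * wderiv T τ + (k + 2 * n) * Q * T τ := by
      show raise (k + 2 * n) (raiseIter k n f) τ = _
      unfold raise
      rw [wderiv_congr hev, hev.self_of_nhds]
    rw [hstep, hwT, hTτ, Finset.mul_sum, Finset.mul_sum, ← Finset.sum_add_distrib]
    -- now pure finset algebra
    set A : ℕ → ℂ := fun m => c m * Q ^ m * (2 * Complex.I) ^ (n + 1 - m) *
      wderivN (n + 1 - m) f τ with hA
    set B : ℕ → ℂ := fun m => (k + 2 * n - m) * c m * Q ^ (m + 1) *
      (2 * Complex.I) ^ (n - m) * wderivN (n - m) f τ with hB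
    have hsplit : ∀ m ∈ Finset.range (n + 1),
        2 * Complex.I * ((c m * (2 * Complex.I) ^ (n - m)) *
          (((m : ℂ) * (Complex.I / 2) * Q ^ (m + 1)) * wderivN (n - m) f τ
            + Q ^ m * wderivN (n - m + 1) f τ))
        + (k + 2 * n) * Q * ((c m * (2 * Complex.I) ^ (n - m)) *
            (Q ^ m * wderivN (n - m) f τ))
        = A m + B m := by
      intro m hm
      have hm' : m ≤ n := Nat.lt_succ_iff.mp (Finset.mem_range.mp hm)
      have e1 : n + 1 - m = (n - m) + 1 := by omega
      simp only [hA, hB, e1]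
      linear_combination ((m : ℂ) * c m * Q ^ (m + 1) * (2 * Complex.I) ^ (n - m) *
        wderivN (n - m) f τ) * Complex.I_sq
    rw [Finset.sum_congr rfl hsplit, Finset.sum_add_distrib]
    have h4 : A (n + 1) = 0 := by simp [hA, hc, Nat.choose_succ_self]
    have hA0 : ∑ m ∈ Finset.range (n + 1), A m
        = (∑ m ∈ Finset.range (n + 1), A (m + 1)) + A 0 := by
      calc ∑ m ∈ Finset.range (n + 1), A m = ∑ m ∈ Finset.range (n + 2), A m := by
            rw [Finset.sum_range_succ A (n + 1), h4, add_zero]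
        _ = (∑ m ∈ Finset.range (n + 1), A (m + 1)) + A 0 := Finset.sum_range_succ' A (n + 1)
    rw [hA0]
    rw [Finset.sum_range_succ' (fun m => ((n+1).choose m : ℂ) *
        (∏ i ∈ Finset.range m, (k + (((n+1) : ℕ) : ℂ) - 1 - i)) *
        Q ^ m * (2 * Complex.I) ^ (n + 1 - m) * wderivN (n + 1 - m) f τ) (n + 1)]
    have hfin : ∀ m ∈ Finset.range (n + 1), A (m + 1) + B m
        = (((n+1).choose (m+1) : ℂ) * (∏ i ∈ Finset.range (m+1),
            (k + (((n+1) : ℕ) : ℂ) - 1 - i)) * Q ^ (m+1) * (2 * Complex.I) ^ (n + 1 - (m+1)) *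
            wderivN (n + 1 - (m+1)) f τ) := by
      intro m hm
      have hm' : m ≤ n := Nat.lt_succ_iff.mp (Finset.mem_range.mp hm)
      have e2 : n + 1 - (m + 1) = n - m := by omega
      simp only [hA, hB, hc, e2]
      linear_combination (-(Q ^ (m+1) * (2 * Complex.I) ^ (n - m) * wderivN (n - m) f τ)) *
        coeff_rec k n m hm'
    rw [add_right_comm, ← Finset.sum_add_distrib]
    refine congrArg₂ (· + ·) (Finset.sum_congr rfl fun m hm => hfin m hm) ?_
    simp [hA, hc]

/-- explicit formula for the iterated Maass raising operator:
`R_k^n f = Σ_{m=0}^{n} C(n,m) (Γ(k+n)/Γ(k+n-m)) y^{-m} (2i)^{n-m} ∂^{n-m}f/∂τ^{n-m}`,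
where `Γ(k+n)/Γ(k+n-m) = (k+n-1)(k+n-2)⋯(k+n-m)` is the falling factorial. -/
theorem raiseIter_formula (k : ℂ) (n : ℕ) (hn : 1 ≤ n) (f : ℂ → ℂ)
    (hf : ContDiff ℝ (⊤ : ℕ∞) f) (τ : ℂ) (hτ : 0 < τ.im) :
    raiseIter k n f τ =
      ∑ m ∈ Finset.range (n + 1), (n.choose m : ℂ) *
        (∏ i ∈ Finset.range m, (k + n - 1 - i)) *
        ((τ.im : ℂ)⁻¹) ^ m * (2 * Complex.I) ^ (n - m) * wderivN (n - m) f τ := by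
  exact raise_key k f hf n τ hτ
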